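/- If R is a Rees congruence on G(E) with corresponding ideal I, then the quotient G(E)/R is isomorphic as a semigroup to G(E \ (I ∩ E⁰)), the graph inverse semigroup of the graph obtained from E by deleting the vertices in I and all edges incident to them. -/

import Mathlib

universe u

/-- A directed graph: vertices, edges, source and range maps. -/
structure DGraph : Type (u + 1) where
  V : Type u
  Ed : Type u
  src : Ed → V
  rng : Ed → V

/-- The end vertex of a list of edges started at `v` (ignoring composability). -/
def DGraph.ranAux (G : DGraph) : G.V → List G.Ed → G.V
  | v, [] => v
  | _, e :: es => DGraph.ranAux G (G.rng e) es

/-- The edges `l` form a composable path starting at `v`. -/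
def DGraph.Chain (G : DGraph) : G.V → List G.Ed → Prop
  | _, [] => True
  | v, e :: es => G.src e = v ∧ DGraph.Chain G (G.rng e) es

theorem DGraph.ranAux_append (G : DGraph) (v : G.V) (l1 l2 : List G.Ed) :
    G.ranAux v (l1 ++ l2) = G.ranAux (G.ranAux v l1) l2 := by
  induction l1 generalizing v with
  | nil => rfl
  | cons e es ih => exact ih (G.rng e)

theorem DGraph.chain_append (G : DGraph) {v : G.V} {l1 l2 : List G.Ed}
    (h1 : G.Chain v l1) (h2 : G.Chain (G.ranAux v l1) l2) : G.Chain v (l1 ++ l2) := by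
  induction l1 generalizing v with
  | nil => exact h2
  | cons e es ih => exact ⟨h1.1, ih h1.2 h2⟩

theorem DGraph.chain_append_right (G : DGraph) {v : G.V} {l1 l2 : List G.Ed}
    (h : G.Chain v (l1 ++ l2)) : G.Chain (G.ranAux v l1) l2 := by
  induction l1 generalizing v with
  | nil => exact h
  | cons e es ih => exact ih h.2

/-- A (finite, directed) path in the graph `G`: a start vertex together
with a composable list of edges. Vertices are the paths of length `0`. -/
structure GPath (G : DGraph.{u}) : Type u where
  start : G.V
  edges : List G.Ed
  chain : G.Chain start edges

namespace GPath

variable {G : DGraph}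

/-- The range (end vertex) of a path. -/
def ran (p : GPath G) : G.V := G.ranAux p.start p.edges

/-- The path of length zero at a vertex. -/
def ofVertex (G : DGraph) (v : G.V) : GPath G := ⟨v, [], trivial⟩

/-- The path of length one given by an edge. -/
def ofEdge (G : DGraph) (e : G.Ed) : GPath G := ⟨G.src e, [e], ⟨rfl, trivial⟩⟩

@[simp] theorem ofVertex_ran (G : DGraph) (v : G.V) : (ofVertex G v).ran = v := rfl

@[simp] theorem ofEdge_ran (G : DGraph) (e : G.Ed) : (ofEdge G e).ran = G.rng e := rfl

/-- Concatenation of composable paths. -/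
def append (p q : GPath G) (h : p.ran = q.start) : GPath G :=
  ⟨p.start, p.edges ++ q.edges,
    G.chain_append p.chain (by
      show G.Chain (G.ranAux p.start p.edges) q.edges
      have : G.ranAux p.start p.edges = q.start := h
      rw [this]; exact q.chain)⟩

@[simp] theorem append_ran (p q : GPath G) (h : p.ran = q.start) :
    (p.append q h).ran = q.ran := by
  show G.ranAux p.start (p.edges ++ q.edges) = q.ran
  rw [G.ranAux_append]
  have : G.ranAux p.start p.edges = q.start := h
  rw [this]; rfl

/-- `y` is an initial segment of the path `p`. -/
def IsPrefixOf (y p : GPath G) : Prop := y.start = p.start ∧ y.edges <+: p.edges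

/-- The remainder `t` of `p` after its initial segment `y`, so that `p = y ++ t`. -/
def remainder (y p : GPath G) (h : y.IsPrefixOf p) : GPath G :=
  ⟨y.ran, p.edges.drop y.edges.length, by
    obtain ⟨l2, hl⟩ := h.2
    rw [← hl, List.drop_left]
    show G.Chain (G.ranAux y.start y.edges) l2
    rw [h.1]
    exact G.chain_append_right (v := p.start) (l1 := y.edges) (l2 := l2)
      (by rw [hl]; exact p.chain)⟩

@[simp] theorem remainder_ran (y p : GPath G) (h : y.IsPrefixOf p) :
    (y.remainder p h).ran = p.ran := by
  obtain ⟨l2, hl⟩ := h.2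
  show G.ranAux y.ran (p.edges.drop y.edges.length) = p.ran
  rw [← hl, List.drop_left]
  show G.ranAux (G.ranAux y.start y.edges) l2 = p.ran
  rw [h.1, ← G.ranAux_append, hl]
  rfl

end GPath

/-- The graph inverse semigroup of `G` (in normal form): its elements are zero together
with the elements `x * y⁻¹` for paths `x`, `y` with the same range. -/
inductive GIS (G : DGraph.{u}) : Type u where
  | zero : GIS G
  | mk (x y : GPath G) (h : x.ran = y.ran) : GIS G

instance (G : DGraph) : Zero (GIS G) := ⟨GIS.zero⟩

open scoped Classical in
/-- Multiplication in the graph inverse semigroup. -/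
noncomputable def GIS.gmul {G : DGraph} : GIS G → GIS G → GIS G
  | GIS.zero, _ => GIS.zero
  | GIS.mk _ _ _, GIS.zero => GIS.zero
  | GIS.mk x y hxy, GIS.mk p q hpq =>
    if h1 : y.IsPrefixOf p then
      GIS.mk (x.append (y.remainder p h1) hxy) q
        (by exact (GPath.append_ran _ _ _).trans ((GPath.remainder_ran _ _ _).trans hpq))
    else if h2 : p.IsPrefixOf y then
      GIS.mk x (q.append (p.remainder y h2) hpq.symm)
        (by exact hxy.trans ((GPath.append_ran _ _ _).trans (GPath.remainder_ran _ _ _)).symm)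
    else GIS.zero

noncomputable instance (G : DGraph) : Mul (GIS G) := ⟨GIS.gmul⟩

/-- The element of `GIS G` corresponding to a vertex `v` (i.e. `v = v * v⁻¹`). -/
def vertexEl (G : DGraph) (v : G.V) : GIS G :=
  GIS.mk (GPath.ofVertex G v) (GPath.ofVertex G v) rfl

/-- The element of `GIS G` corresponding to an edge `e` (i.e. `e = e * r(e)⁻¹`). -/
def edgeEl (G : DGraph) (e : G.Ed) : GIS G :=
  GIS.mk (GPath.ofEdge G e) (GPath.ofVertex G (G.rng e)) rfl

/-- The inverse operation on `GIS G`: `(x y⁻¹)⁻¹ = y x⁻¹`. -/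
def GIS.inv {G : DGraph} : GIS G → GIS G
  | GIS.zero => GIS.zero
  | GIS.mk x y h => GIS.mk y x h.symm

/-- `a` lies in the principal left ideal generated by `b` (`S¹a ⊆ S¹b`). -/
def GreenLeL {G : DGraph} (a b : GIS G) : Prop := a = b ∨ ∃ c, a = c * b

/-- `a` lies in the principal right ideal generated by `b` (`aS¹ ⊆ bS¹`). -/
def GreenLeR {G : DGraph} (a b : GIS G) : Prop := a = b ∨ ∃ c, a = b * c

/-- `a` lies in the principal two-sided ideal generated by `b` (`S¹aS¹ ⊆ S¹bS¹`). -/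
def GreenLeJ {G : DGraph} (a b : GIS G) : Prop :=
  a = b ∨ (∃ c, a = c * b) ∨ (∃ c, a = b * c) ∨ (∃ c d, a = c * b * d)

/-- Green's `L`-relation. -/
def GreenEqL {G : DGraph} (a b : GIS G) : Prop := GreenLeL a b ∧ GreenLeL b a

/-- Green's `R`-relation. -/
def GreenEqR {G : DGraph} (a b : GIS G) : Prop := GreenLeR a b ∧ GreenLeR b a

/-- Green's `J`-relation. -/
def GreenEqJ {G : DGraph} (a b : GIS G) : Prop := GreenLeJ a b ∧ GreenLeJ b a

/-- There is a (possibly trivial) directed path from `v` to `w` in `G`. -/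
def GConnected (G : DGraph) (v w : G.V) : Prop := ∃ t : GPath G, t.start = v ∧ t.ran = w

/-- `I` is a (two-sided) ideal of `GIS G`. -/
def GISIdeal {G : DGraph} (I : Set (GIS G)) : Prop :=
  ∀ a ∈ I, ∀ c : GIS G, a * c ∈ I ∧ c * a ∈ I

/-- `R` is the Rees congruence of some ideal `I`, i.e. `R = (I × I) ∪ Δ`. -/
def IsReesCon {G : DGraph} (R : Con (GIS G)) : Prop :=
  ∃ I : Set (GIS G), GISIdeal I ∧ ∀ a b : GIS G, R a b ↔ (a ∈ I ∧ b ∈ I) ∨ a = b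

/-- The only congruences on `GIS G` are the universal one and the diagonal. -/
def CongFree (G : DGraph) : Prop :=
  ∀ R : Con (GIS G), (∀ a b : GIS G, R a b) ∨ (∀ a b : GIS G, R a b ↔ a = b)

/-- The natural partial order on the inverse semigroup `GIS G`:
`a ≤ b` iff `a = ε * b` for some idempotent `ε`. -/
def natLe {G : DGraph} (a b : GIS G) : Prop := ∃ ε : GIS G, ε * ε = ε ∧ a = ε * b

/-- The graph obtained from `G` by deleting the vertices in `S` and all
edges incident to them. -/
def DGraph.delete (G : DGraph) (S : Set G.V) : DGraph where
  V := {v : G.V // v ∉ S}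
  Ed := {e : G.Ed // G.src e ∉ S ∧ G.rng e ∉ S}
  src e := ⟨G.src e.1, e.2.1⟩
  rng e := ⟨G.rng e.1, e.2.2⟩

/-- The graph with a single vertex and `n` loops; its graph inverse semigroup
is the polycyclic monoid `Pₙ`. -/
def polyGraph (n : ℕ) : DGraph :=
  ⟨PUnit, Fin n, fun _ => PUnit.unit, fun _ => PUnit.unit⟩

/-! The vertices `S` whose idempotents lie in `I` form a hereditary set, and a nonzero element
`x y⁻¹` lies in `I` exactly when its range vertex does. A path ending outside `S` avoids `S`
altogether, so the nonzero elements of `G(E)` outside `I` are precisely the images of the nonzero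
elements of `G(E \ S)` under the natural embedding, and collapsing `I` to zero turns this embedding
into an isomorphism. -/

namespace GPath

variable {G : DGraph}

theorem ext {p q : GPath G} (h₁ : p.start = q.start) (h₂ : p.edges = q.edges) : p = q := by
  cases p; cases q; cases h₁; cases h₂; rfl

theorem isPrefixOf_refl (p : GPath G) : p.IsPrefixOf p := ⟨rfl, List.prefix_rfl⟩

theorem ofVertex_isPrefixOf (p : GPath G) : (ofVertex G p.start).IsPrefixOf p :=
  ⟨rfl, List.nil_prefix⟩

theorem append_remainder_self (x y : GPath G) (h : x.ran = y.ran) :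
    x.append (y.remainder y y.isPrefixOf_refl) h = x :=
  ext rfl (by simp [append, remainder])

theorem ofVertex_append_remainder (p : GPath G) :
    (ofVertex G p.start).append ((ofVertex G p.start).remainder p p.ofVertex_isPrefixOf) rfl = p :=
  ext rfl (by simp [append, remainder, ofVertex])

end GPath

namespace GIS

variable {G : DGraph}

theorem mk_congr {x₁ y₁ x₂ y₂ : GPath G} {h₁ : x₁.ran = y₁.ran} {h₂ : x₂.ran = y₂.ran}
    (hx : x₁ = x₂) (hy : y₁ = y₂) : GIS.mk x₁ y₁ h₁ = GIS.mk x₂ y₂ h₂ := by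
  cases hx; cases hy; rfl

protected theorem mul_zero (a : GIS G) : a * 0 = 0 := by cases a <;> rfl

theorem mk_mul_mk_of_isPrefixOf {x y p q : GPath G} (hxy : x.ran = y.ran) (hpq : p.ran = q.ran)
    (h : y.IsPrefixOf p) :
    GIS.mk x y hxy * GIS.mk p q hpq =
      GIS.mk (x.append (y.remainder p h) hxy) q
        ((GPath.append_ran _ _ _).trans ((GPath.remainder_ran _ _ _).trans hpq)) :=
  dif_pos h

theorem mk_mul_mk_of_isPrefixOf' {x y p q : GPath G} (hxy : x.ran = y.ran) (hpq : p.ran = q.ran)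
    (h₁ : ¬ y.IsPrefixOf p) (h₂ : p.IsPrefixOf y) :
    GIS.mk x y hxy * GIS.mk p q hpq =
      GIS.mk x (q.append (p.remainder y h₂) hpq.symm)
        (hxy.trans ((GPath.append_ran _ _ _).trans (GPath.remainder_ran _ _ _)).symm) :=
  (dif_neg h₁).trans (dif_pos h₂)

theorem mk_mul_mk_eq_zero {x y p q : GPath G} (hxy : x.ran = y.ran) (hpq : p.ran = q.ran)
    (h₁ : ¬ y.IsPrefixOf p) (h₂ : ¬ p.IsPrefixOf y) :
    GIS.mk x y hxy * GIS.mk p q hpq = 0 :=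
  (dif_neg h₁).trans (dif_neg h₂)

theorem mk_mul_mk_same {x y z : GPath G} (hxy : x.ran = y.ran) (hyz : y.ran = z.ran) :
    GIS.mk x y hxy * GIS.mk y z hyz = GIS.mk x z (hxy.trans hyz) := by
  rw [mk_mul_mk_of_isPrefixOf hxy hyz y.isPrefixOf_refl]
  exact mk_congr (x.append_remainder_self y hxy) rfl

theorem vertexEl_mul_mk {x y : GPath G} (hxy : x.ran = y.ran) :
    vertexEl G x.start * GIS.mk x y hxy = GIS.mk x y hxy := by
  rw [vertexEl, mk_mul_mk_of_isPrefixOf rfl hxy x.ofVertex_isPrefixOf]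
  exact mk_congr x.ofVertex_append_remainder rfl

end GIS

section Ideal

variable {G : DGraph} {I : Set (GIS G)}

/-- `x y⁻¹` and the vertex `r(x)` divide each other: `r(x) = x⁻¹ (x y⁻¹) y` and
`x y⁻¹ = x r(x) y⁻¹`. -/
theorem GISIdeal.mk_mem_iff (hI : GISIdeal I) {x y : GPath G} (h : x.ran = y.ran) :
    GIS.mk x y h ∈ I ↔ vertexEl G x.ran ∈ I := by
  have hv : x.ran = (GPath.ofVertex G x.ran).ran := rfl
  constructor
  · intro hxy
    have hmem := (hI _ (hI _ hxy (GIS.mk y _ (h.symm.trans hv))).1 (GIS.mk _ x hv.symm)).2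
    rwa [GIS.mk_mul_mk_same, GIS.mk_mul_mk_same] at hmem
  · intro hvI
    have hmem := (hI _ (hI _ hvI (GIS.mk _ y (hv.symm.trans h))).1 (GIS.mk x _ hv)).2
    rwa [vertexEl, GIS.mk_mul_mk_same, GIS.mk_mul_mk_same] at hmem

theorem GISIdeal.vertexEl_ran_mem (hI : GISIdeal I) (x : GPath G)
    (hx : vertexEl G x.start ∈ I) : vertexEl G x.ran ∈ I := by
  rw [← hI.mk_mem_iff rfl, ← GIS.vertexEl_mul_mk]
  exact (hI _ hx _).1

theorem GISIdeal.zero_mem (hI : GISIdeal I) {a : GIS G} (ha : a ∈ I) : (0 : GIS G) ∈ I :=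
  GIS.mul_zero a ▸ (hI a ha 0).1

end Ideal

def DGraph.IsHereditary (G : DGraph) (S : Set G.V) : Prop :=
  ∀ e : G.Ed, G.src e ∈ S → G.rng e ∈ S

theorem GISIdeal.isHereditary {G : DGraph} {I : Set (GIS G)} (hI : GISIdeal I) :
    G.IsHereditary {v | vertexEl G v ∈ I} :=
  fun e he => hI.vertexEl_ran_mem (GPath.ofEdge G e) he

section Delete

variable {G : DGraph} {S : Set G.V}

theorem DGraph.chain_delete_map_val {v : (G.delete S).V} {l : List (G.delete S).Ed}
    (h : (G.delete S).Chain v l) : G.Chain v.1 (l.map Subtype.val) := by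
  induction l generalizing v with
  | nil => trivial
  | cons e es ih => exact ⟨congrArg Subtype.val h.1, ih h.2⟩

theorem DGraph.ranAux_delete_map_val (v : (G.delete S).V) (l : List (G.delete S).Ed) :
    G.ranAux v.1 (l.map Subtype.val) = ((G.delete S).ranAux v l).1 := by
  induction l generalizing v with
  | nil => rfl
  | cons e es ih => exact ih ((G.delete S).rng e)

theorem DGraph.exists_chain_delete (hS : G.IsHereditary S) {v : G.V} {l : List G.Ed}
    (hl : G.Chain v l) (hv : G.ranAux v l ∉ S) :
    ∃ (w : (G.delete S).V) (l' : List (G.delete S).Ed),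
      w.1 = v ∧ l'.map Subtype.val = l ∧ (G.delete S).Chain w l' := by
  induction l generalizing v with
  | nil => exact ⟨⟨v, hv⟩, [], rfl, rfl, trivial⟩
  | cons e es ih =>
    obtain ⟨w, l', hw, rfl, hl'⟩ := ih hl.2 hv
    have hr : G.rng e ∉ S := hw ▸ w.2
    have hs : G.src e ∉ S := fun hs => hr (hS e hs)
    refine ⟨⟨v, hl.1 ▸ hs⟩, ⟨e, hs, hr⟩ :: l', rfl, rfl, Subtype.ext hl.1, ?_⟩
    obtain rfl : w = ⟨G.rng e, hr⟩ := Subtype.ext hw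
    exact hl'

namespace GPath

def ofDelete (p : GPath (G.delete S)) : GPath G :=
  ⟨p.start.1, p.edges.map Subtype.val, DGraph.chain_delete_map_val p.chain⟩

theorem ofDelete_ran (p : GPath (G.delete S)) : p.ofDelete.ran = p.ran.1 :=
  DGraph.ranAux_delete_map_val p.start p.edges

theorem ofDelete_ran_eq_ran {x y : GPath (G.delete S)} (h : x.ran = y.ran) :
    x.ofDelete.ran = y.ofDelete.ran :=
  (ofDelete_ran x).trans ((congrArg Subtype.val h).trans (ofDelete_ran y).symm)

theorem ofDelete_injective : Function.Injective (ofDelete (G := G) (S := S)) := fun _ _ h =>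
  ext (Subtype.ext (congrArg start h))
    ((List.map_injective_iff.mpr Subtype.val_injective) (congrArg edges h))

theorem ofDelete_isPrefixOf_iff {y p : GPath (G.delete S)} :
    y.ofDelete.IsPrefixOf p.ofDelete ↔ y.IsPrefixOf p :=
  and_congr Subtype.val_inj (List.prefix_map_iff_of_injective Subtype.val_injective)

theorem ofDelete_append_remainder (x y p : GPath (G.delete S)) (hxy : x.ran = y.ran)
    (h : y.IsPrefixOf p) :
    (x.append (y.remainder p h) hxy).ofDelete =
      x.ofDelete.append (y.ofDelete.remainder p.ofDelete (ofDelete_isPrefixOf_iff.mpr h))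
        (ofDelete_ran_eq_ran hxy) :=
  ext rfl ((List.map_append ..).trans (congrArg (_ ++ ·)
    (List.map_drop.trans (congrArg (List.drop · _) (List.length_map _).symm))))

theorem exists_ofDelete_eq (hS : G.IsHereditary S) (x : GPath G) (hx : x.ran ∉ S) :
    ∃ p : GPath (G.delete S), p.ofDelete = x := by
  obtain ⟨w, l, hw, hl, hchain⟩ := DGraph.exists_chain_delete hS x.chain hx
  exact ⟨⟨w, l, hchain⟩, ext hw hl⟩

end GPath

namespace GIS

noncomputable def ofDelete : GIS (G.delete S) →ₙ* GIS G where
  toFun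
    | GIS.zero => GIS.zero
    | GIS.mk x y h => GIS.mk x.ofDelete y.ofDelete (GPath.ofDelete_ran_eq_ran h)
  map_mul' a b := by
    rcases a with _ | ⟨x, y, hxy⟩
    · rfl
    rcases b with _ | ⟨p, q, hpq⟩
    · rfl
    show _ = GIS.mk x.ofDelete y.ofDelete (GPath.ofDelete_ran_eq_ran hxy) *
      GIS.mk p.ofDelete q.ofDelete (GPath.ofDelete_ran_eq_ran hpq)
    by_cases h₁ : y.IsPrefixOf p
    · rw [mk_mul_mk_of_isPrefixOf hxy hpq h₁,
        mk_mul_mk_of_isPrefixOf _ _ (GPath.ofDelete_isPrefixOf_iff.mpr h₁)]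
      exact mk_congr (GPath.ofDelete_append_remainder ..) rfl
    by_cases h₂ : p.IsPrefixOf y
    · rw [mk_mul_mk_of_isPrefixOf' hxy hpq h₁ h₂, mk_mul_mk_of_isPrefixOf' _ _
        (mt GPath.ofDelete_isPrefixOf_iff.mp h₁) (GPath.ofDelete_isPrefixOf_iff.mpr h₂)]
      exact mk_congr rfl (GPath.ofDelete_append_remainder ..)
    · rw [mk_mul_mk_eq_zero hxy hpq h₁ h₂, mk_mul_mk_eq_zero _ _
        (mt GPath.ofDelete_isPrefixOf_iff.mp h₁) (mt GPath.ofDelete_isPrefixOf_iff.mp h₂)]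
      rfl

theorem ofDelete_injective : Function.Injective (ofDelete (G := G) (S := S)) := by
  rintro (_ | ⟨x, y, hxy⟩) (_ | ⟨p, q, hpq⟩) h
  · rfl
  · cases h
  · cases h
  · injection h with hx hy
    exact mk_congr (GPath.ofDelete_injective hx) (GPath.ofDelete_injective hy)

theorem mk_mem_range_ofDelete (hS : G.IsHereditary S) {x y : GPath G} (hxy : x.ran = y.ran)
    (hx : x.ran ∉ S) : GIS.mk x y hxy ∈ Set.range (ofDelete (S := S)) := by
  obtain ⟨p, rfl⟩ := x.exists_ofDelete_eq hS hx
  obtain ⟨q, rfl⟩ := y.exists_ofDelete_eq hS (hxy ▸ hx)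
  exact ⟨GIS.mk p q (Subtype.ext ((p.ofDelete_ran.symm.trans hxy).trans q.ofDelete_ran)), rfl⟩

end GIS

end Delete

theorem GISIdeal.eq_zero_of_ofDelete_mem {G : DGraph} {I : Set (GIS G)} (hI : GISIdeal I)
    {a : GIS (G.delete {v | vertexEl G v ∈ I})} (ha : GIS.ofDelete a ∈ I) : a = 0 := by
  rcases a with _ | ⟨x, y, hxy⟩
  · rfl
  · exact absurd ((hI.mk_mem_iff _).mp ha) (x.ofDelete_ran ▸ x.ran.2)

/-- `T` is the Rees quotient `M / I` when `φ` embeds it onto the complement of `I` together with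
a single element of `I` (the zero of the quotient). -/
theorem Con.mkMulHom_comp_bijective {M T : Type*} [Mul M] [Mul T] {R : Con M} {I : Set M}
    (hR : ∀ a b, R a b ↔ (a ∈ I ∧ b ∈ I) ∨ a = b) (φ : T →ₙ* M) (hφ : Function.Injective φ)
    (hsub : ∀ a b, φ a ∈ I → φ b ∈ I → a = b) (hcover : ∀ m ∉ Set.range φ, m ∈ I)
    (hmeet : ∀ m ∈ I, ∃ t, φ t ∈ I) : Function.Bijective (R.mkMulHom.comp φ) := by
  refine ⟨fun a b hab => ?_, fun m => ?_⟩
  · rcases (hR _ _).mp (R.eq.mp hab) with ⟨ha, hb⟩ | h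
    · exact hsub a b ha hb
    · exact hφ h
  · induction m using Con.induction_on with
    | H m =>
      rcases em (m ∈ Set.range φ) with ⟨t, rfl⟩ | hm
      · exact ⟨t, rfl⟩
      · obtain ⟨t, ht⟩ := hmeet m (hcover m hm)
        exact ⟨t, R.eq.mpr ((hR _ _).mpr (Or.inl ⟨ht, hcover m hm⟩))⟩

theorem GISIdeal.mem_of_notMem_range_ofDelete {G : DGraph} {I : Set (GIS G)} (hI : GISIdeal I)
    {a : GIS G} (ha : a ∉ Set.range (GIS.ofDelete (S := {v | vertexEl G v ∈ I}))) : a ∈ I := by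
  rcases a with _ | ⟨x, y, hxy⟩
  · exact absurd ⟨0, rfl⟩ ha
  · by_contra hxyI
    exact ha (GIS.mk_mem_range_ofDelete hI.isHereditary hxy (mt (hI.mk_mem_iff hxy).mpr hxyI))

/-- If `R` is the Rees congruence on `G(E)` of an ideal `I`, then
`G(E)/R` is isomorphic as a semigroup to `G(E \ (I ∩ E⁰))`. -/
theorem stmt10 (G : DGraph) (R : Con (GIS G)) (I : Set (GIS G)) (hI : GISIdeal I)
    (hR : ∀ a b : GIS G, R a b ↔ (a ∈ I ∧ b ∈ I) ∨ a = b) :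
    Nonempty (R.Quotient ≃* GIS (G.delete {v : G.V | vertexEl G v ∈ I})) := by
  have hsub (a b : GIS (G.delete {v | vertexEl G v ∈ I}))
      (ha : GIS.ofDelete a ∈ I) (hb : GIS.ofDelete b ∈ I) : a = b := by
    rw [hI.eq_zero_of_ofDelete_mem ha, hI.eq_zero_of_ofDelete_mem hb]
  have hbij := Con.mkMulHom_comp_bijective hR GIS.ofDelete GIS.ofDelete_injective hsub
    (fun _ => hI.mem_of_notMem_range_ofDelete) (fun _ hm => ⟨0, hI.zero_mem hm⟩)
  exact ⟨(MulEquiv.ofBijective _ hbij).symm⟩
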